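/- Let a be an even positive integer and b an odd positive integer, let λ = (1+a, 1^b) be the hook partition with arm length a and leg length b, and let α = (1 + a/2, 1^{(b−1)/2}). Then the Littlewood–Richardson coefficient c^λ_{αα} is at least 1. -/

import Mathlib

/-!
The tableau is explicit. With `a = 2m` and `b = 2k + 1`, the skew diagram `λ/α` consists of the
last `m` cells of the first row and the last `k + 1` cells of the first column. Filling the row
part with `1`s and the column part with `1, 2, …, k + 1` from top to bottom gives an LR tableau of
content `α`: every entry `≥ 2` sits directly below the entry one smaller, which gives the lattice
condition. Since `lrCoeff` is an `ncard`, which vanishes on infinite sets, one also needs that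
there are only finitely many LR tableaux of a given shape and content: they vanish off the finite
skew diagram and their entries are bounded by the length of the content.
-/

/-- A partition: a weakly decreasing finite sequence (list) of positive
integers. -/
def IsPartition (l : List ℕ) : Prop :=
  l.Pairwise (· ≥ ·) ∧ ∀ x ∈ l, 0 < x

/-- The `i`-th part (0-indexed) of a partition, `0` beyond its length. -/
def part (l : List ℕ) (i : ℕ) : ℕ := l.getD i 0

/-- Cell `(i, j)` (row `i`, column `j`, both 0-indexed) lies in the skew
Young diagram `ν/λ`. -/
def InSkew (nu lam : List ℕ) (i j : ℕ) : Prop :=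
  part lam i ≤ j ∧ j < part nu i

/-- Cell `(i, j)` comes weakly before cell `(r, c)` in the reverse reading
order: rows are read top to bottom, and each row is read right to left. -/
def ReadingLE (i j r c : ℕ) : Prop := i < r ∨ (i = r ∧ c ≤ j)

/-- `T` is a Littlewood–Richardson tableau of shape `ν/λ` and content `μ`:
`λ ⊆ ν`, the entries of `T` are positive exactly on the cells of the skew
diagram `ν/λ`, entries weakly increase from left to right along rows,
entries strictly increase from top to bottom down columns, for every `j ≥ 1`
the entry `j` occurs exactly `μ_j` times, and the reverse reading word is a
lattice word: every prefix contains at least as many occurrences of `j` as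
of `j + 1`, for every `j ≥ 1`. -/
structure IsLRTableau (nu lam mu : List ℕ) (T : ℕ → ℕ → ℕ) : Prop where
  subset : ∀ i, part lam i ≤ part nu i
  support : ∀ i j, 0 < T i j ↔ InSkew nu lam i j
  row_weak : ∀ i j j', InSkew nu lam i j → InSkew nu lam i j' → j ≤ j' →
    T i j ≤ T i j'
  col_strict : ∀ i i' j, InSkew nu lam i j → InSkew nu lam i' j → i < i' →
    T i j < T i' j
  content : ∀ k : ℕ, {p : ℕ × ℕ | T p.1 p.2 = k + 1}.ncard = part mu k
  lattice : ∀ r c k : ℕ,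
    {p : ℕ × ℕ | T p.1 p.2 = k + 2 ∧ ReadingLE p.1 p.2 r c}.ncard ≤
    {p : ℕ × ℕ | T p.1 p.2 = k + 1 ∧ ReadingLE p.1 p.2 r c}.ncard

/-- The Littlewood–Richardson coefficient `c^ν_{λμ}`: the number of
Littlewood–Richardson tableaux of shape `ν/λ` and content `μ`. -/
noncomputable def lrCoeff (nu lam mu : List ℕ) : ℕ :=
  {T : ℕ → ℕ → ℕ | IsLRTableau nu lam mu T}.ncard

/-- The Newell–Littlewood coefficient
`N^ν_{λμ} = Σ_{α,β,γ} c^λ_{αβ} · c^μ_{αγ} · c^ν_{βγ}`, the sum running over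
all triples of partitions `(α, β, γ)` (only finitely many terms are
nonzero). -/
noncomputable def nlCoeff (lam mu nu : List ℕ) : ℕ :=
  ∑ᶠ x : {l : List ℕ // IsPartition l} × {l : List ℕ // IsPartition l} ×
      {l : List ℕ // IsPartition l},
    lrCoeff lam x.1.val x.2.1.val * lrCoeff mu x.1.val x.2.2.val *
      lrCoeff nu x.2.1.val x.2.2.val

/-- The hook partition `(1 + a, 1^b)` with arm length `a` and leg length
`b`. -/
def hook (a b : ℕ) : List ℕ := (1 + a) :: List.replicate b 1

lemma part_le_sum (l : List ℕ) (i : ℕ) : part l i ≤ l.sum := by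
  rw [part, List.getD_eq_getElem?_getD]
  cases h : l[i]? with
  | none => simp
  | some x => exact List.le_sum_of_mem (List.mem_of_getElem? h)

lemma part_eq_zero_of_length_le {l : List ℕ} {i : ℕ} (h : l.length ≤ i) : part l i = 0 := by
  simp [part, h]

lemma finite_setOf_inSkew (nu lam : List ℕ) :
    {p : ℕ × ℕ | InSkew nu lam p.1 p.2}.Finite := by
  refine (Set.finite_Iio nu.length |>.prod (Set.finite_Iio nu.sum)).subset ?_
  rintro ⟨i, j⟩ ⟨-, hj⟩
  refine ⟨?_, hj.trans_le (part_le_sum nu i)⟩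
  by_contra! hi
  simp [part_eq_zero_of_length_le (not_lt.1 hi)] at hj

lemma finite_setOf_eq_succ_of_pos_imp_inSkew {nu lam : List ℕ} {T : ℕ → ℕ → ℕ}
    (hT : ∀ i j, 0 < T i j → InSkew nu lam i j) (v : ℕ) :
    {p : ℕ × ℕ | T p.1 p.2 = v + 1}.Finite :=
  (finite_setOf_inSkew nu lam).subset fun p hp => hT p.1 p.2 (by simp_all)

lemma lattice_of_pred_above {T : ℕ → ℕ → ℕ}
    (hfin : ∀ v, {p : ℕ × ℕ | T p.1 p.2 = v + 1}.Finite)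
    (habove : ∀ i j, 2 ≤ T i j → 0 < i ∧ T (i - 1) j + 1 = T i j) (r c v : ℕ) :
    {p : ℕ × ℕ | T p.1 p.2 = v + 2 ∧ ReadingLE p.1 p.2 r c}.ncard ≤
      {p : ℕ × ℕ | T p.1 p.2 = v + 1 ∧ ReadingLE p.1 p.2 r c}.ncard := by
  refine Set.ncard_le_ncard_of_injOn (fun p => (p.1 - 1, p.2)) ?_ ?_
    ((hfin v).subset fun p hp => hp.1)
  · rintro ⟨i, j⟩ ⟨hv, hread⟩
    dsimp only at hv
    have := habove i j (by omega)
    exact ⟨by simp only; omega, by unfold ReadingLE at hread ⊢; omega⟩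
  · rintro ⟨i, j⟩ ⟨hv, -⟩ ⟨i', j'⟩ ⟨hv', -⟩ h
    dsimp only at hv hv'
    have := (habove i j (by omega)).1
    have := (habove i' j' (by omega)).1
    simp only [Prod.mk.injEq] at h ⊢
    omega

namespace IsLRTableau

variable {nu lam mu : List ℕ} {T : ℕ → ℕ → ℕ}

lemma le_length (hT : IsLRTableau nu lam mu T) (i j : ℕ) : T i j ≤ mu.length := by
  by_contra! h
  obtain ⟨v, hv⟩ : ∃ v, T i j = v + 1 := Nat.exists_eq_add_one.2 (by omega)
  have hfin := finite_setOf_eq_succ_of_pos_imp_inSkew (fun i j => (hT.support i j).1) v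
  have hpos := (Set.ncard_pos hfin).2 ⟨(i, j), hv⟩
  rw [hT.content, part_eq_zero_of_length_le (by omega)] at hpos
  exact hpos.false

lemma eq_of_eqOn (hT : IsLRTableau nu lam mu T) {T' : ℕ → ℕ → ℕ}
    (hT' : IsLRTableau nu lam mu T')
    (h : ∀ i j, InSkew nu lam i j → T i j = T' i j) : T = T' := by
  funext i j
  by_cases hs : InSkew nu lam i j
  · exact h i j hs
  · rw [Nat.eq_zero_of_not_pos (mt (hT.support i j).1 hs),
      Nat.eq_zero_of_not_pos (mt (hT'.support i j).1 hs)]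

end IsLRTableau

lemma finite_setOf_isLRTableau (nu lam mu : List ℕ) :
    {T : ℕ → ℕ → ℕ | IsLRTableau nu lam mu T}.Finite := by
  let S := {p : ℕ × ℕ | InSkew nu lam p.1 p.2}
  have : Finite S := (finite_setOf_inSkew nu lam).to_subtype
  let restrict (T : ℕ → ℕ → ℕ) (p : S) : ℕ := T p.1.1 p.1.2
  have hbounded : restrict '' {T | IsLRTableau nu lam mu T} ⊆
      {f | ∀ p, f p ∈ Set.Iic mu.length} := by
    rintro _ ⟨T, hT, rfl⟩ p
    exact hT.le_length _ _
  refine .of_finite_image ((Set.Finite.pi' fun _ => Set.finite_Iic _).subset hbounded) ?_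
  intro T hT T' hT' h
  exact hT.eq_of_eqOn hT' fun i j hs => congrFun h ⟨(i, j), hs⟩

lemma one_le_lrCoeff_of_isLRTableau {nu lam mu : List ℕ} {T : ℕ → ℕ → ℕ}
    (hT : IsLRTableau nu lam mu T) : 1 ≤ lrCoeff nu lam mu :=
  (Set.ncard_pos (finite_setOf_isLRTableau nu lam mu)).2 ⟨T, hT⟩

lemma part_hook (a b i : ℕ) :
    part (hook a b) i = if i = 0 then 1 + a else if i ≤ b then 1 else 0 := by
  cases i with
  | zero => simp [part, hook]
  | succ i =>
    rw [part, hook, List.getD_cons_succ, List.getD_eq_getElem?_getD, List.getElem?_replicate,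
      if_neg i.succ_ne_zero]
    split_ifs <;> simp <;> omega

lemma inSkew_hook_iff (m k i j : ℕ) :
    InSkew (hook (2 * m) (2 * k + 1)) (hook m k) i j ↔
      i = 0 ∧ m < j ∧ j ≤ 2 * m ∨ k < i ∧ i ≤ 2 * k + 1 ∧ j = 0 := by
  rw [InSkew, part_hook, part_hook]
  split_ifs <;> omega

def hookTableau (m k i j : ℕ) : ℕ :=
  if i = 0 ∧ m < j ∧ j ≤ 2 * m then 1
  else if k < i ∧ i ≤ 2 * k + 1 ∧ j = 0 then i - k else 0

lemma hookTableau_pos_iff (m k i j : ℕ) :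
    0 < hookTableau m k i j ↔ InSkew (hook (2 * m) (2 * k + 1)) (hook m k) i j := by
  rw [inSkew_hook_iff, hookTableau]
  split_ifs <;> omega

lemma setOf_hookTableau_eq_one (m k : ℕ) :
    {p : ℕ × ℕ | hookTableau m k p.1 p.2 = 1} =
      ↑(({0} ×ˢ Finset.Ioc m (2 * m)) ∪ {(k + 1, 0)}) := by
  ext ⟨i, j⟩
  simp only [Finset.coe_union, Finset.coe_product, Finset.coe_singleton, Finset.coe_Ioc,
    Set.mem_union, Set.mem_prod, Set.mem_singleton_iff, Set.mem_Ioc, Prod.mk.injEq]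
  change hookTableau m k i j = 1 ↔ _
  unfold hookTableau
  split_ifs <;> grind

lemma setOf_hookTableau_eq_add_two (m k v : ℕ) :
    {p : ℕ × ℕ | hookTableau m k p.1 p.2 = v + 2} =
      if v < k then {(k + v + 2, 0)} else ∅ := by
  ext ⟨i, j⟩
  change hookTableau m k i j = v + 2 ↔ _
  unfold hookTableau
  split_ifs <;> simp [Prod.ext_iff] <;> omega

lemma ncard_setOf_hookTableau_eq_succ (m k v : ℕ) :
    {p : ℕ × ℕ | hookTableau m k p.1 p.2 = v + 1}.ncard = part (hook m k) v := by
  rw [part_hook]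
  rcases v with _ | v
  · rw [setOf_hookTableau_eq_one, Set.ncard_coe_finset, Finset.card_union_of_disjoint (by simp),
      Finset.card_product]
    simp only [Finset.card_singleton, Nat.card_Ioc, one_mul, ↓reduceIte]
    omega
  · rw [setOf_hookTableau_eq_add_two, if_neg v.succ_ne_zero]
    by_cases h : v < k
    · rw [if_pos h, if_pos (by omega), Set.ncard_singleton]
    · rw [if_neg h, if_neg (by omega), Set.ncard_empty]

lemma hookTableau_pred_above (m k i j : ℕ) (h : 2 ≤ hookTableau m k i j) :
    0 < i ∧ hookTableau m k (i - 1) j + 1 = hookTableau m k i j := by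
  unfold hookTableau at *
  split_ifs at * <;> omega

lemma isLRTableau_hookTableau (m k : ℕ) :
    IsLRTableau (hook (2 * m) (2 * k + 1)) (hook m k) (hook m k) (hookTableau m k) where
  subset i := by
    rw [part_hook, part_hook]
    split_ifs <;> omega
  support := hookTableau_pos_iff m k
  row_weak i j j' h h' _ := by
    rw [inSkew_hook_iff] at h h'
    unfold hookTableau
    split_ifs <;> omega
  col_strict i i' j h h' _ := by
    rw [inSkew_hook_iff] at h h'
    unfold hookTableau
    split_ifs <;> omega
  content := ncard_setOf_hookTableau_eq_succ m k
  lattice := lattice_of_pred_above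
    (finite_setOf_eq_succ_of_pos_imp_inSkew fun i j => (hookTableau_pos_iff m k i j).1)
    (hookTableau_pred_above m k)

theorem one_le_lrCoeff_hook_even_arm_alpha_alpha_general (a b : ℕ)
    (ha : Even a) (hb : Odd b) :
    1 ≤ lrCoeff (hook a b) (hook (a / 2) ((b - 1) / 2))
        (hook (a / 2) ((b - 1) / 2)) := by
  obtain ⟨m, rfl⟩ := ha
  obtain ⟨k, rfl⟩ := hb
  rw [show (m + m) / 2 = m by omega, show (2 * k + 1 - 1) / 2 = k by omega, ← two_mul]
  exact one_le_lrCoeff_of_isLRTableau (isLRTableau_hookTableau m k)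

/-- For the hook `λ = (1+a, 1^b)` with `a` even positive and `b` odd, and
`α = (1 + a/2, 1^{(b−1)/2})`, one has `c^λ_{αα} ≥ 1`. -/
theorem one_le_lrCoeff_hook_even_arm_alpha_alpha (a b : ℕ)
    (ha : Even a) (ha' : 0 < a) (hb : Odd b) :
    1 ≤ lrCoeff (hook a b) (hook (a / 2) ((b - 1) / 2))
        (hook (a / 2) ((b - 1) / 2)) :=
  one_le_lrCoeff_hook_even_arm_alpha_alpha_general a b ha hb
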